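/- In the OPT setup, |X_{W*} \ J| ≥ ν(S_{X_{W*}}) = sprank(A^S_{X_{W*}}); that is, the number of rows of X_{W*} outside J is at least the generic rank of the row-submatrix pattern indexed by X_{W*}. -/

import Mathlib

open Matrix MeasureTheory

/-- `A` has sparsity pattern `S`: the nonzero entries of `A` are exactly those indexed by `S`. -/
def HasPattern {m n : ℕ} (S : Finset (Fin m × Fin n)) (A : Matrix (Fin m) (Fin n) ℝ) : Prop :=
  ∀ i j, A i j ≠ 0 ↔ (i, j) ∈ S

/-- Generic rank of the class of matrices with sparsity pattern `S`. -/
noncomputable def sprank {m n : ℕ} (S : Finset (Fin m × Fin n)) : ℕ :=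
  sSup {r : ℕ | ∃ A : Matrix (Fin m) (Fin n) ℝ, HasPattern S A ∧ A.rank = r}

/-- The sparsity pattern restricted to the rows in `T` (rows outside `T` become zero). -/
def patternOn {m n : ℕ} (S : Finset (Fin m × Fin n)) (T : Finset (Fin m)) :
    Finset (Fin m × Fin n) :=
  S.filter (fun p => p.1 ∈ T)

/-- A matching of a sparsity pattern: any two distinct pairs differ in both coordinates. -/
def IsMatching {m n : ℕ} (M : Finset (Fin m × Fin n)) : Prop :=
  ∀ p ∈ M, ∀ q ∈ M, p ≠ q → p.1 ≠ q.1 ∧ p.2 ≠ q.2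

/-- `nu S` : maximum cardinality of a matching contained in `S`. -/
noncomputable def nu {m n : ℕ} (S : Finset (Fin m × Fin n)) : ℕ :=
  sSup {k : ℕ | ∃ M ⊆ S, IsMatching M ∧ M.card = k}

/-- ℓ₀ "norm": number of nonzero entries of a vector. -/
noncomputable def l0 {m : ℕ} (y : Fin m → ℝ) : ℕ :=
  (Finset.univ.filter (fun i => y i ≠ 0)).card

/-- `cospark A` : minimum of `‖A x‖₀` over nonzero `x`. -/
noncomputable def cospark {m n : ℕ} (A : Matrix (Fin m) (Fin n) ℝ) : ℕ :=
  sInf {k : ℕ | ∃ x : Fin n → ℝ, x ≠ 0 ∧ l0 (A.mulVec x) = k}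

/-- Generic cospark of the class of matrices with sparsity pattern `S`. -/
noncomputable def spcospark {m n : ℕ} (S : Finset (Fin m × Fin n)) : ℕ :=
  sSup {k : ℕ | ∃ A : Matrix (Fin m) (Fin n) ℝ, HasPattern S A ∧ cospark A = k}

/-- The row-submatrix `A_T`, realized as `A` with the rows outside `T` zeroed out. -/
noncomputable def rowRestrict {m n : ℕ} (A : Matrix (Fin m) (Fin n) ℝ) (T : Finset (Fin m)) :
    Matrix (Fin m) (Fin n) ℝ :=
  Matrix.of fun i j => if i ∈ T then A i j else 0

/-- `X_W` : the rows of the pattern `S` all of whose nonzero positions lie in the columns `W`. -/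
def rowsIn {m n : ℕ} (S : Finset (Fin m × Fin n)) (W : Finset (Fin n)) : Finset (Fin m) :=
  Finset.univ.filter (fun i => ∀ j, (i, j) ∈ S → j ∈ W)

namespace Stmt13Aux

open Finset Submodule Module Polynomial

variable {m n : ℕ}

lemma nu_bddAbove (S : Finset (Fin m × Fin n)) :
    BddAbove {k : ℕ | ∃ M ⊆ S, IsMatching M ∧ M.card = k} := by
  refine ⟨S.card, ?_⟩
  rintro k ⟨M, hMS, -, rfl⟩
  exact Finset.card_le_card hMS

lemma card_le_nu {S M : Finset (Fin m × Fin n)} (hMS : M ⊆ S) (hM : IsMatching M) :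
    M.card ≤ nu S :=
  le_csSup (nu_bddAbove S) ⟨M, hMS, hM, rfl⟩

lemma nu_spec (S : Finset (Fin m × Fin n)) :
    ∃ M, M ⊆ S ∧ IsMatching M ∧ M.card = nu S := by
  have h0 : (0:ℕ) ∈ {k : ℕ | ∃ M ⊆ S, IsMatching M ∧ M.card = k} :=
    ⟨∅, by simp, by intro p hp; simp at hp, by simp⟩
  obtain ⟨M, h1, h2, h3⟩ := Nat.sSup_mem ⟨0, h0⟩ (nu_bddAbove S)
  exact ⟨M, h1, h2, h3⟩

lemma fst_injOn {M : Finset (Fin m × Fin n)} (hM : IsMatching M) :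
    Set.InjOn Prod.fst (M : Set (Fin m × Fin n)) := fun p hp q hq h => by
  by_contra hne
  exact (hM p hp q hq hne).1 h

lemma snd_injOn {M : Finset (Fin m × Fin n)} (hM : IsMatching M) :
    Set.InjOn Prod.snd (M : Set (Fin m × Fin n)) := fun p hp q hq h => by
  by_contra hne
  exact (hM p hp q hq hne).2 h

lemma rank_eq_rows (A : Matrix (Fin m) (Fin n) ℝ) :
    A.rank = Module.finrank ℝ (Submodule.span ℝ (Set.range A)) := by
  conv_lhs => rw [← Matrix.rank_transpose A]
  rw [Matrix.rank_eq_finrank_span_cols]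
  rfl

lemma card_le_rank {ι : Type*} [Fintype ι] {A : Matrix (Fin m) (Fin n) ℝ}
    {v : ι → Fin m} (hli : LinearIndependent ℝ (fun x => A (v x))) :
    Fintype.card ι ≤ A.rank := by
  rw [rank_eq_rows]
  have h1 : Submodule.span ℝ (Set.range fun x => A (v x)) ≤
      Submodule.span ℝ (Set.range A) :=
    Submodule.span_mono (Set.range_comp_subset_range v A)
  calc Fintype.card ι
      = Module.finrank ℝ (Submodule.span ℝ (Set.range fun x => A (v x))) :=
        (finrank_span_eq_card hli).symm
    _ ≤ _ := Submodule.finrank_mono h1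

lemma rank_le_nu {S : Finset (Fin m × Fin n)} {A : Matrix (Fin m) (Fin n) ℝ}
    (hA : HasPattern S A) : A.rank ≤ nu S := by
  classical
  obtain ⟨b, hbsub, hbspan, hbli⟩ := exists_linearIndependent ℝ (Set.range A)
  have hbfin : b.Finite := (Set.finite_range A).subset hbsub
  haveI := hbfin.fintype
  have hrank : A.rank = b.toFinset.card := by
    rw [rank_eq_rows, ← hbspan, finrank_span_set_eq_card hbli]
  have hex : ∀ x : b, ∃ i, A i = (x : Fin n → ℝ) := fun x => hbsub x.2
  choose g hg using hex
  have hginj : Function.Injective g := by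
    intro x y hxy
    apply Subtype.ext
    rw [← hg x, ← hg y, hxy]
  set t : b → Finset (Fin n) := fun x => Finset.univ.filter (fun c => (g x, c) ∈ S) with ht
  have hall : ∀ s : Finset b, s.card ≤ (s.biUnion t).card := by
    intro s
    set N := s.biUnion t with hN
    set π : (Fin n → ℝ) →ₗ[ℝ] (↥N → ℝ) :=
      LinearMap.funLeft ℝ ℝ (fun c : ↥N => (c : Fin n)) with hπ
    have hsupp : ∀ x : b, x ∈ s → ∀ c : Fin n, c ∉ N → (x : Fin n → ℝ) c = 0 := by
      intro x hx c hc
      by_contra hne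
      have h2 : A (g x) c ≠ 0 := by rw [hg x]; exact hne
      have hmem : (g x, c) ∈ S := (hA _ _).1 h2
      exact hc (Finset.mem_biUnion.2 ⟨x, hx, by simp [ht, hmem]⟩)
    have hli2 : LinearIndependent ℝ (fun x : ↥s => ((x : b) : Fin n → ℝ)) :=
      hbli.comp (fun x : ↥s => (x : b)) Subtype.val_injective
    have hdisj : Disjoint
        (Submodule.span ℝ (Set.range (fun x : ↥s => ((x : b) : Fin n → ℝ))))
        (LinearMap.ker π) := by
      rw [Submodule.disjoint_def]
      intro u hu hk
      have hle : Submodule.span ℝ (Set.range (fun x : ↥s => ((x : b) : Fin n → ℝ))) ≤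
          Submodule.pi {c : Fin n | c ∉ N} (fun _ => (⊥ : Submodule ℝ ℝ)) := by
        rw [Submodule.span_le]
        rintro w ⟨x, rfl⟩
        rw [SetLike.mem_coe, Submodule.mem_pi]
        intro c hc
        rw [Submodule.mem_bot]
        exact hsupp x x.2 c hc
      have husupp : ∀ c : Fin n, c ∉ N → u c = 0 := by
        intro c hc
        have := Submodule.mem_pi.1 (hle hu) c hc
        simpa using this
      have hker : ∀ c : Fin n, c ∈ N → u c = 0 := by
        intro c hc
        have h0 : π u = 0 := LinearMap.mem_ker.1 hk
        exact congrFun h0 ⟨c, hc⟩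
      funext c
      by_cases hc : c ∈ N
      · exact hker c hc
      · exact husupp c hc
    have hli3 : LinearIndependent ℝ
        (π ∘ fun x : ↥s => ((x : b) : Fin n → ℝ)) := hli2.map hdisj
    have hcard := hli3.fintype_card_le_finrank
    simpa [Module.finrank_pi, Fintype.card_coe] using hcard
  obtain ⟨f, hfinj, hft⟩ := (Finset.all_card_le_biUnion_card_iff_exists_injective t).1 hall
  set MM : Finset (Fin m × Fin n) := Finset.univ.image (fun x : b => (g x, f x)) with hMM
  have hpair : Function.Injective (fun x : b => (g x, f x)) := fun x y h =>
    hginj (congrArg Prod.fst h)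
  have hMMcard : MM.card = b.toFinset.card := by
    rw [hMM, Finset.card_image_of_injective _ hpair, Finset.card_univ]
    exact (Set.toFinset_card b).symm
  have hMMsub : MM ⊆ S := by
    intro p hp
    rw [hMM] at hp
    obtain ⟨x, -, rfl⟩ := Finset.mem_image.1 hp
    have := hft x
    simpa [ht] using this
  have hMMmatch : IsMatching MM := by
    intro p hp q hq hpq
    rw [hMM] at hp hq
    obtain ⟨x, -, rfl⟩ := Finset.mem_image.1 hp
    obtain ⟨y, -, rfl⟩ := Finset.mem_image.1 hq
    have hxy : x ≠ y := by rintro rfl; exact hpq rfl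
    exact ⟨fun h => hxy (hginj h), fun h => hxy (hfinj h)⟩
  calc A.rank = b.toFinset.card := hrank
    _ = MM.card := hMMcard.symm
    _ ≤ nu S := card_le_nu hMMsub hMMmatch

lemma exists_pattern (S : Finset (Fin m × Fin n)) :
    ∃ A : Matrix (Fin m) (Fin n) ℝ, HasPattern S A := by
  classical
  refine ⟨fun i j => if (i,j) ∈ S then 1 else 0, fun i j => ?_⟩
  by_cases h : (i,j) ∈ S <;> simp [h]

lemma sprank_le_nu (S : Finset (Fin m × Fin n)) : sprank S ≤ nu S := by
  obtain ⟨A0, hA0⟩ := exists_pattern S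
  refine csSup_le ⟨A0.rank, A0, hA0, rfl⟩ ?_
  rintro r ⟨A, hA, rfl⟩
  exact rank_le_nu hA

lemma nu_le_sprank (S : Finset (Fin m × Fin n)) : nu S ≤ sprank S := by
  classical
  obtain ⟨M, hMS, hM, hMcard⟩ := nu_spec S
  set P : Matrix ↥M ↥M ℝ[X] := fun p q =>
    if ((p : Fin m × Fin n).1, (q : Fin m × Fin n).2) ∈ M then 1
    else if ((p : Fin m × Fin n).1, (q : Fin m × Fin n).2) ∈ S then X else 0 with hP
  have hdiag : ∀ p q : ↥M, (((p : Fin m × Fin n).1, (q : Fin m × Fin n).2) ∈ M) ↔ p = q := by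
    intro p q
    constructor
    · intro hmem
      have h1 : (p : Fin m × Fin n) = ((p : Fin m × Fin n).1, (q : Fin m × Fin n).2) := by
        by_contra hne
        exact (hM _ p.2 _ hmem hne).1 rfl
      have h2 : (q : Fin m × Fin n) = ((p : Fin m × Fin n).1, (q : Fin m × Fin n).2) := by
        by_contra hne
        exact (hM _ q.2 _ hmem hne).2 rfl
      exact Subtype.ext (h1.trans h2.symm)
    · rintro rfl
      simpa using p.2
  have hmap1 : P.map (Polynomial.evalRingHom 0) = 1 := by
    ext p q
    by_cases h : p = q
    · subst h
      rw [Matrix.map_apply]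
      simp [hP, (hdiag p p).2 rfl]
    · have hm : ¬ (((p : Fin m × Fin n).1, (q : Fin m × Fin n).2) ∈ M) := fun hmem =>
        h ((hdiag p q).1 hmem)
      rw [Matrix.map_apply]
      simp only [hP, Matrix.one_apply, if_neg h, if_neg hm, coe_evalRingHom]
      split <;> simp
  have hdet0 : Polynomial.eval 0 P.det = 1 := by
    have h := RingHom.map_det (Polynomial.evalRingHom 0) P
    rw [RingHom.mapMatrix_apply, hmap1, Matrix.det_one] at h
    simpa using h
  have hdetne : P.det ≠ 0 := fun h => by simp [h] at hdet0
  have hQ : (X * P.det : ℝ[X]) ≠ 0 := mul_ne_zero Polynomial.X_ne_zero hdetne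
  obtain ⟨t, ht⟩ := (Polynomial.finite_setOf_isRoot hQ).infinite_compl.nonempty
  have htz : Polynomial.eval t (X * P.det) ≠ 0 := ht
  have htne : t ≠ 0 := by
    intro h
    subst h
    simp at htz
  have hdet_t : Polynomial.eval t P.det ≠ 0 := by
    intro h
    rw [Polynomial.eval_mul] at htz
    simp [h] at htz
  set A : Matrix (Fin m) (Fin n) ℝ := fun i j =>
    if (i, j) ∈ M then 1 else if (i, j) ∈ S then t else 0 with hAdef
  have hA : HasPattern S A := by
    intro i j
    by_cases h1 : (i, j) ∈ M
    · simp [hAdef, h1, hMS h1]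
    · by_cases h2 : (i, j) ∈ S <;> simp [hAdef, h1, h2, htne]
  have hsub : (fun (p : ↥M) (q : ↥M) => A (p : Fin m × Fin n).1 (q : Fin m × Fin n).2)
      = P.map (Polynomial.evalRingHom t) := by
    ext p q
    rw [Matrix.map_apply]
    simp only [coe_evalRingHom, hAdef, hP]
    split_ifs <;> simp
  have hBunit : IsUnit (P.map (Polynomial.evalRingHom t)) := by
    rw [Matrix.isUnit_iff_isUnit_det]
    have h := RingHom.map_det (Polynomial.evalRingHom t) P
    rw [RingHom.mapMatrix_apply] at h
    rw [← h]
    simpa using isUnit_iff_ne_zero.2 hdet_t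
  have hli : LinearIndependent ℝ (fun p : ↥M => (P.map (Polynomial.evalRingHom t)) p) :=
    Matrix.linearIndependent_rows_iff_isUnit.2 hBunit
  rw [← hsub] at hli
  have hli2 : LinearIndependent ℝ
      ((LinearMap.funLeft ℝ ℝ (fun q : ↥M => (q : Fin m × Fin n).2)) ∘
        (fun p : ↥M => A (p : Fin m × Fin n).1)) := hli
  have hli3 : LinearIndependent ℝ (fun p : ↥M => A (p : Fin m × Fin n).1) :=
    LinearIndependent.of_comp _ hli2
  have hle : Fintype.card ↥M ≤ A.rank := card_le_rank hli3
  have hnu : nu S ≤ A.rank := by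
    rw [← hMcard, ← Fintype.card_coe M]
    exact hle
  refine hnu.trans (le_csSup ⟨n, ?_⟩ ⟨A, hA, rfl⟩)
  rintro r ⟨B, -, rfl⟩
  exact Matrix.rank_le_width B

lemma sprank_eq_nu (S : Finset (Fin m × Fin n)) : sprank S = nu S :=
  le_antisymm (sprank_le_nu S) (nu_le_sprank S)

lemma path_lemma (hn : 1 ≤ n) (S : Finset (Fin m × Fin n)) (v : Fin n)
    (M' : Finset (Fin m × Fin n)) (hM'm : IsMatching M') (hM'S : M' ⊆ S)
    (hM'X : ∀ p ∈ M', ((p : Fin m × Fin n).1, v) ∉ S) :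
    ∀ (k : ℕ) (M : Finset (Fin m × Fin n)) (J : Finset (Fin m)),
      (M' \ M).card ≤ k →
      M ⊆ S → IsMatching M → M.card = n - 1 →
      (∀ p ∈ M, (p : Fin m × Fin n).2 ≠ v) →
      (∀ j ∈ J, (j, v) ∉ S) →
      (∀ j ∈ J, ∀ p ∈ M, (p : Fin m × Fin n).1 ≠ j) →
      (∀ N ⊆ S, IsMatching N →
        (∀ q ∈ N, (q : Fin m × Fin n).1 ∈ J ∨ ∃ p ∈ M, (p : Fin m × Fin n).1 = q.1) →
        N.card ≤ n - 1) →
      M'.card ≤ ((Finset.univ.filter (fun i => (i, v) ∉ S)) \ J).card := by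
  classical
  intro k
  induction k with
  | zero =>
    intro M J hk hMS hM hMcard hMv hJv hJM _hstar
    -- In this case necessarily no row of M' is in J (otherwise M' \ M is nonempty).
    by_cases hRJ : ∃ p ∈ M', (p : Fin m × Fin n).1 ∈ J
    · exfalso
      obtain ⟨p₀, hp₀, hj⟩ := hRJ
      have hp₀M : p₀ ∉ M := fun h => (hJM _ hj p₀ h) rfl
      have : p₀ ∈ M' \ M := Finset.mem_sdiff.2 ⟨hp₀, hp₀M⟩
      have := Finset.card_pos.2 ⟨p₀, this⟩
      omega
    · push_neg at hRJ
      have hcard : M'.card = (M'.image Prod.fst).card :=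
        (Finset.card_image_of_injOn (fst_injOn hM'm)).symm
      rw [hcard]
      apply Finset.card_le_card
      intro i hi
      obtain ⟨p, hp, rfl⟩ := Finset.mem_image.1 hi
      refine Finset.mem_sdiff.2 ⟨?_, fun h => hRJ p hp h⟩
      exact Finset.mem_filter.2 ⟨Finset.mem_univ _, hM'X p hp⟩
  | succ k ih =>
    intro M J hk hMS hM hMcard hMv hJv hJM hstar
    by_cases hRJ : ∃ p ∈ M', (p : Fin m × Fin n).1 ∈ J
    swap
    · -- same direct bound as in the base case
      push_neg at hRJ
      have hcard : M'.card = (M'.image Prod.fst).card :=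
        (Finset.card_image_of_injOn (fst_injOn hM'm)).symm
      rw [hcard]
      apply Finset.card_le_card
      intro i hi
      obtain ⟨p, hp, rfl⟩ := Finset.mem_image.1 hi
      refine Finset.mem_sdiff.2 ⟨?_, fun h => hRJ p hp h⟩
      exact Finset.mem_filter.2 ⟨Finset.mem_univ _, hM'X p hp⟩
    obtain ⟨p₀, hp₀, hjJ⟩ := hRJ
    obtain ⟨j, c₁⟩ := p₀
    simp only at hjJ
    have hjvS : (j, v) ∉ S := hM'X _ hp₀
    have hjc₁S : (j, c₁) ∈ S := hM'S hp₀
    have hc₁v : c₁ ≠ v := fun h => hjvS (h ▸ hjc₁S)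
    have hp₀M : (j, c₁) ∉ M := fun h => (hJM _ hjJ _ h) rfl
    -- columns of M are exactly everything except v
    have hMcols : M.image Prod.snd = Finset.univ.erase v := by
      apply Finset.eq_of_subset_of_card_le
      · intro c hc
        obtain ⟨p, hp, rfl⟩ := Finset.mem_image.1 hc
        exact Finset.mem_erase.2 ⟨hMv p hp, Finset.mem_univ _⟩
      · rw [Finset.card_erase_of_mem (Finset.mem_univ v), Finset.card_univ,
          Fintype.card_fin, Finset.card_image_of_injOn (snd_injOn hM), hMcard]
    -- find the M-edge in column c₁
    have hc₁M : c₁ ∈ M.image Prod.snd := by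
      rw [hMcols]
      exact Finset.mem_erase.2 ⟨hc₁v, Finset.mem_univ _⟩
    obtain ⟨q, hq, hq2⟩ := Finset.mem_image.1 hc₁M
    have hq1j : (q : Fin m × Fin n).1 ≠ j := hJM j hjJ q hq
    have hqpair : q = ((q : Fin m × Fin n).1, c₁) := by
      rw [← hq2]
    -- the swapped matching
    set Mt : Finset (Fin m × Fin n) := insert (j, c₁) (M.erase q) with hMt
    have hq1row : ∀ r ∈ M.erase q, (r : Fin m × Fin n).1 ≠ (q : Fin m × Fin n).1 := by
      intro r hr
      obtain ⟨hrq, hrM⟩ := Finset.mem_erase.1 hr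
      intro h
      exact hrq (by
        by_contra hne
        exact ((hM r hrM q hq hne).1) h)
    have hc₁row : ∀ r ∈ M.erase q, (r : Fin m × Fin n).2 ≠ c₁ := by
      intro r hr h
      obtain ⟨hrq, hrM⟩ := Finset.mem_erase.1 hr
      refine hrq ?_
      by_contra hne
      exact ((hM r hrM q hq hne).2) (h.trans hq2.symm)
    have hjrow : ∀ r ∈ M.erase q, (r : Fin m × Fin n).1 ≠ j := by
      intro r hr
      exact hJM j hjJ r (Finset.mem_of_mem_erase hr)
    have hp₀Mt : (j, c₁) ∉ M.erase q := fun h => hp₀M (Finset.mem_of_mem_erase h)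
    have hMtcard : Mt.card = n - 1 := by
      rw [hMt, Finset.card_insert_of_notMem hp₀Mt, Finset.card_erase_of_mem hq, hMcard]
      have : 1 ≤ M.card := Finset.card_pos.2 ⟨q, hq⟩
      omega
    have hMtmatch : IsMatching Mt := by
      intro p hp r hr hpr
      rw [hMt, Finset.mem_insert] at hp hr
      rcases hp with hp | hp <;> rcases hr with hr | hr
      · exact absurd (hp.trans hr.symm) hpr
      · subst hp
        exact ⟨fun h => hjrow r hr h.symm, fun h => hc₁row r hr h.symm⟩
      · subst hr
        exact ⟨hjrow p hp, hc₁row p hp⟩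
      · exact hM p (Finset.mem_of_mem_erase hp) r (Finset.mem_of_mem_erase hr) hpr
    have hMtS : Mt ⊆ S := by
      intro p hp
      rw [hMt, Finset.mem_insert] at hp
      rcases hp with rfl | hp
      · exact hjc₁S
      · exact hMS (Finset.mem_of_mem_erase hp)
    have hMtv : ∀ p ∈ Mt, (p : Fin m × Fin n).2 ≠ v := by
      intro p hp
      rw [hMt, Finset.mem_insert] at hp
      rcases hp with rfl | hp
      · exact hc₁v
      · exact hMv p (Finset.mem_of_mem_erase hp)
    have hMtrows : ∀ p ∈ Mt, (p : Fin m × Fin n).1 = j ∨ ∃ r ∈ M, (r : Fin m × Fin n).1 = p.1 := by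
      intro p hp
      rw [hMt, Finset.mem_insert] at hp
      rcases hp with rfl | hp
      · exact Or.inl rfl
      · exact Or.inr ⟨p, Finset.mem_of_mem_erase hp, rfl⟩
    by_cases hX : ((q : Fin m × Fin n).1, v) ∈ S
    · -- contradiction: a matching of size n inside the allowed rows
      exfalso
      set N : Finset (Fin m × Fin n) := insert ((q : Fin m × Fin n).1, v) Mt with hN
      have hqvMt : ((q : Fin m × Fin n).1, v) ∉ Mt := fun h => (hMtv _ h) rfl
      have hNcard : N.card = n := by
        rw [hN, Finset.card_insert_of_notMem hqvMt, hMtcard]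
        have h1 : 1 ≤ M.card := Finset.card_pos.2 ⟨q, hq⟩
        omega
      have hNmatch : IsMatching N := by
        intro p hp r hr hpr
        rw [hN, Finset.mem_insert] at hp hr
        rcases hp with hp | hp <;> rcases hr with hr | hr
        · exact absurd (hp.trans hr.symm) hpr
        · subst hp
          constructor
          · intro h
            rw [hMt, Finset.mem_insert] at hr
            rcases hr with rfl | hr
            · exact hq1j h
            · exact hq1row r hr h.symm
          · exact fun h => (hMtv r hr) h.symm
        · subst hr
          constructor
          · intro h
            rw [hMt, Finset.mem_insert] at hp
            rcases hp with rfl | hp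
            · exact hq1j h.symm
            · exact hq1row p hp h
          · exact fun h => (hMtv p hp) h
        · exact hMtmatch p hp r hr hpr
      have hNS : N ⊆ S := by
        intro p hp
        rw [hN, Finset.mem_insert] at hp
        rcases hp with rfl | hp
        · exact hX
        · exact hMtS hp
      have hNrows : ∀ p ∈ N, (p : Fin m × Fin n).1 ∈ J ∨
          ∃ r ∈ M, (r : Fin m × Fin n).1 = p.1 := by
        intro p hp
        rw [hN, Finset.mem_insert] at hp
        rcases hp with rfl | hp
        · exact Or.inr ⟨q, hq, rfl⟩
        · rcases hMtrows p hp with h | h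
          · exact Or.inl (h ▸ hjJ)
          · exact Or.inr h
      have := hstar N hNS hNmatch hNrows
      omega
    · -- recurse with the swapped matching and swapped J
      have hq1J : (q : Fin m × Fin n).1 ∉ J := fun h => (hJM _ h q hq) rfl
      set Jt : Finset (Fin m) := insert (q : Fin m × Fin n).1 (J.erase j) with hJt
      have hq1Jt : (q : Fin m × Fin n).1 ∉ J.erase j := fun h =>
        hq1J (Finset.mem_of_mem_erase h)
      -- measure decreases
      have hkk : (M' \ Mt).card ≤ k := by
        have hsub2 : M' \ Mt ⊆ (M' \ M).erase (j, c₁) := by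
          intro x hx
          obtain ⟨hxM', hxMt⟩ := Finset.mem_sdiff.1 hx
          have hxp₀ : x ≠ (j, c₁) := fun h => hxMt (h ▸ Finset.mem_insert_self _ _)
          refine Finset.mem_erase.2 ⟨hxp₀, Finset.mem_sdiff.2 ⟨hxM', fun hxM => ?_⟩⟩
          have hxq : x ≠ q := by
            intro h
            subst h
            have : x ≠ (j, c₁) := hxp₀
            have h2 := (hM'm x hxM' (j, c₁) hp₀ hxp₀).2
            exact h2 (hq2 ▸ rfl)
          exact hxMt (Finset.mem_insert.2 (Or.inr (Finset.mem_erase.2 ⟨hxq, hxM⟩)))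
        have h1 : (j, c₁) ∈ M' \ M := Finset.mem_sdiff.2 ⟨hp₀, hp₀M⟩
        have h2 := Finset.card_le_card hsub2
        rw [Finset.card_erase_of_mem h1] at h2
        omega
      have hJtv : ∀ x ∈ Jt, (x, v) ∉ S := by
        intro x hx
        rw [hJt, Finset.mem_insert] at hx
        rcases hx with rfl | hx
        · exact hX
        · exact hJv x (Finset.mem_of_mem_erase hx)
      have hJtM : ∀ x ∈ Jt, ∀ p ∈ Mt, (p : Fin m × Fin n).1 ≠ x := by
        intro x hx p hp
        rw [hJt, Finset.mem_insert] at hx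
        rw [hMt, Finset.mem_insert] at hp
        rcases hx with rfl | hx <;> rcases hp with rfl | hp
        · exact fun h => hq1j h.symm
        · exact hq1row p hp
        · intro h
          exact (Finset.mem_erase.1 hx).1 h.symm
        · exact fun h => hJM x (Finset.mem_of_mem_erase hx) p (Finset.mem_of_mem_erase hp) h
      have hstar' : ∀ N ⊆ S, IsMatching N →
          (∀ p ∈ N, (p : Fin m × Fin n).1 ∈ Jt ∨ ∃ r ∈ Mt, (r : Fin m × Fin n).1 = p.1) →
          N.card ≤ n - 1 := by
        intro N hNS hNm hNrows
        refine hstar N hNS hNm ?_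
        intro p hp
        rcases hNrows p hp with h | ⟨r, hr, hrp⟩
        · rw [hJt, Finset.mem_insert] at h
          rcases h with h | h
          · exact Or.inr ⟨q, hq, h.symm⟩
          · exact Or.inl (Finset.mem_of_mem_erase h)
        · rcases hMtrows r hr with h2 | ⟨r2, hr2, hr2r⟩
          · exact Or.inl (hrp ▸ h2 ▸ hjJ)
          · exact Or.inr ⟨r2, hr2, hr2r.trans hrp⟩
      have hJX : J ⊆ Finset.univ.filter (fun i => (i, v) ∉ S) := by
        intro x hx
        exact Finset.mem_filter.2 ⟨Finset.mem_univ _, hJv x hx⟩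
      have hJtX : Jt ⊆ Finset.univ.filter (fun i => (i, v) ∉ S) := by
        intro x hx
        exact Finset.mem_filter.2 ⟨Finset.mem_univ _, hJtv x hx⟩
      have hJtcard : Jt.card = J.card := by
        rw [hJt, Finset.card_insert_of_notMem hq1Jt, Finset.card_erase_of_mem hjJ]
        have : 1 ≤ J.card := Finset.card_pos.2 ⟨j, hjJ⟩
        omega
      have hgoal := ih Mt Jt hkk hMtS hMtmatch hMtcard hMtv hJtv hJtM hstar'
      rw [Finset.card_sdiff_of_subset hJtX, Finset.card_sdiff_of_subset hJX] at *
      rw [hJtcard] at hgoal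
      exact hgoal

end Stmt13Aux

open Stmt13Aux in
theorem stmt13_aux {m n : ℕ} (hn : 1 ≤ n) (hmn : n < m) (S : Finset (Fin m × Fin n))
    (hspr : sprank S = n)
    (OPT : Finset (Fin m)) (hOPT : nu (patternOn S OPT) = n - 1)
    (hmax : ∀ T : Finset (Fin m), nu (patternOn S T) = n - 1 → T.card ≤ OPT.card)
    (M : Finset (Fin m × Fin n)) (hMsub : M ⊆ patternOn S OPT)
    (hM : IsMatching M) (hMcard : M.card = n - 1)
    (I : Finset (Fin m)) (hI : I = M.image Prod.fst)
    (J : Finset (Fin m)) (hJ : J = OPT \ I) (hJne : J.Nonempty)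
    (W : Finset (Fin n)) (hW : W = M.image Prod.snd)
    (v : Fin n) (hv : v ∉ W)
    :
    nu (patternOn S (rowsIn S W)) ≤ (rowsIn S W \ J).card ∧
      nu (patternOn S (rowsIn S W)) = sprank (patternOn S (rowsIn S W)) := by
  classical
  subst hI hJ hW
  have hMS : M ⊆ S := hMsub.trans (Finset.filter_subset _ _)
  have hMrowsOPT : ∀ p ∈ M, (p : Fin m × Fin n).1 ∈ OPT := fun p hp =>
    (Finset.mem_filter.1 (hMsub hp)).2
  have hMv : ∀ p ∈ M, (p : Fin m × Fin n).2 ≠ v := by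
    intro p hp h
    exact hv (h ▸ Finset.mem_image.2 ⟨p, hp, rfl⟩)
  have hWerase : M.image Prod.snd = Finset.univ.erase v := by
    apply Finset.eq_of_subset_of_card_le
    · intro c hc
      obtain ⟨p, hp, rfl⟩ := Finset.mem_image.1 hc
      exact Finset.mem_erase.2 ⟨hMv p hp, Finset.mem_univ _⟩
    · rw [Finset.card_erase_of_mem (Finset.mem_univ v), Finset.card_univ,
        Fintype.card_fin, Finset.card_image_of_injOn (snd_injOn hM), hMcard]
  have hrowsIn : rowsIn S (M.image Prod.snd) =
      Finset.univ.filter (fun i => (i, v) ∉ S) := by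
    ext i
    simp only [rowsIn, Finset.mem_filter, Finset.mem_univ, true_and]
    constructor
    · intro h hvS
      have := h v hvS
      rw [hWerase] at this
      exact (Finset.mem_erase.1 this).1 rfl
    · intro h j hj
      rw [hWerase]
      refine Finset.mem_erase.2 ⟨fun hjv => h (hjv ▸ hj), Finset.mem_univ _⟩
  have hstar : ∀ N ⊆ S, IsMatching N → (∀ q ∈ N, (q : Fin m × Fin n).1 ∈ OPT) →
      N.card ≤ n - 1 := by
    intro N hNS hNm hNrows
    rw [← hOPT]
    refine card_le_nu ?_ hNm
    intro q hq
    exact Finset.mem_filter.2 ⟨hNS hq, hNrows q hq⟩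
  have hJv : ∀ j ∈ OPT \ M.image Prod.fst, (j, v) ∉ S := by
    intro j hj hjvS
    obtain ⟨hjOPT, hjI⟩ := Finset.mem_sdiff.1 hj
    have hjM : (j, v) ∉ M := fun h => hjI (Finset.mem_image.2 ⟨_, h, rfl⟩)
    have hNm : IsMatching (insert (j, v) M) := by
      intro p hp r hr hpr
      rw [Finset.mem_insert] at hp hr
      rcases hp with rfl | hp <;> rcases hr with rfl | hr
      · exact absurd rfl hpr
      · refine ⟨fun h => hjI (Finset.mem_image.2 ⟨r, hr, h.symm⟩), fun h => hMv r hr h.symm⟩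
      · refine ⟨fun h => hjI (Finset.mem_image.2 ⟨p, hp, h⟩), fun h => hMv p hp h⟩
      · exact hM p hp r hr hpr
    have hNS : insert (j, v) M ⊆ S := by
      intro p hp
      rw [Finset.mem_insert] at hp
      rcases hp with rfl | hp
      · exact hjvS
      · exact hMS hp
    have hNrows : ∀ q ∈ insert (j, v) M, (q : Fin m × Fin n).1 ∈ OPT := by
      intro q hq
      rw [Finset.mem_insert] at hq
      rcases hq with rfl | hq
      · exact hjOPT
      · exact hMrowsOPT q hq
    have hcard := hstar _ hNS hNm hNrows
    rw [Finset.card_insert_of_notMem hjM, hMcard] at hcard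
    omega
  have hJM : ∀ j ∈ OPT \ M.image Prod.fst, ∀ p ∈ M, (p : Fin m × Fin n).1 ≠ j := by
    intro j hj p hp h
    exact (Finset.mem_sdiff.1 hj).2 (Finset.mem_image.2 ⟨p, hp, h⟩)
  obtain ⟨M', hM'sub, hM'm, hM'card⟩ := nu_spec (patternOn S (rowsIn S (M.image Prod.snd)))
  have hM'S : M' ⊆ S := hM'sub.trans (Finset.filter_subset _ _)
  have hM'X : ∀ p ∈ M', ((p : Fin m × Fin n).1, v) ∉ S := by
    intro p hp
    have := (Finset.mem_filter.1 (hM'sub hp)).2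
    rw [hrowsIn] at this
    exact (Finset.mem_filter.1 this).2
  have hstar2 : ∀ N ⊆ S, IsMatching N →
      (∀ q ∈ N, (q : Fin m × Fin n).1 ∈ OPT \ M.image Prod.fst ∨
        ∃ p ∈ M, (p : Fin m × Fin n).1 = q.1) →
      N.card ≤ n - 1 := by
    intro N hNS hNm hNrows
    refine hstar N hNS hNm ?_
    intro q hq
    rcases hNrows q hq with h | ⟨p, hp, hpq⟩
    · exact (Finset.mem_sdiff.1 h).1
    · exact hpq ▸ hMrowsOPT p hp
  have hmain := path_lemma hn S v M' hM'm hM'S hM'X ((M' \ M).card) M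
    (OPT \ M.image Prod.fst) le_rfl hMS hM hMcard hMv hJv hJM hstar2
  constructor
  · rw [← hM'card, hrowsIn]
    exact hmain
  · exact (sprank_eq_nu _).symm

/-- in the OPT setup, `|X_{W*} \ J| ≥ ν(S_{X_{W*}}) = sprank(A^S_{X_{W*}})`. -/
theorem stmt13 {m n : ℕ} (hn : 1 ≤ n) (hmn : n < m) (S : Finset (Fin m × Fin n))
    (hspr : sprank S = n)
    (OPT : Finset (Fin m)) (hOPT : nu (patternOn S OPT) = n - 1)
    (hmax : ∀ T : Finset (Fin m), nu (patternOn S T) = n - 1 → T.card ≤ OPT.card)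
    (M : Finset (Fin m × Fin n)) (hMsub : M ⊆ patternOn S OPT)
    (hM : IsMatching M) (hMcard : M.card = n - 1)
    (I : Finset (Fin m)) (hI : I = M.image Prod.fst)
    (J : Finset (Fin m)) (hJ : J = OPT \ I) (hJne : J.Nonempty)
    (W : Finset (Fin n)) (hW : W = M.image Prod.snd)
    (v : Fin n) (hv : v ∉ W)
    :
    nu (patternOn S (rowsIn S W)) ≤ (rowsIn S W \ J).card ∧
      nu (patternOn S (rowsIn S W)) = sprank (patternOn S (rowsIn S W)) := by
  exact stmt13_aux hn hmn S hspr OPT hOPT hmax M hMsub hM hMcard I hI J hJ hJne W hW v hv
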